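/- Let D be a set and let g : D → {F,U,T}. Define forall(g) = T if g(d)=T for all d, forall(g) = F if g(d)=F for some d, and forall(g) = U otherwise. Then forall(g) ≠ U if and only if (g(d) ≠ U for all d) or (g(d) = F for some d). -/

import Mathlib

inductive TV | F | U | T
deriving DecidableEq

def tneg : TV → TV
  | .F => .T
  | .U => .U
  | .T => .F

def tand : TV → TV → TV
  | .F, _ => .F
  | _, .F => .F
  | .U, _ => .U
  | _, .U => .U
  | .T, .T => .T

def tor : TV → TV → TV
  | .T, _ => .T
  | _, .T => .T
  | .U, _ => .U
  | _, .U => .U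
  | .F, .F => .F

def timp : TV → TV → TV
  | .F, _ => .T
  | .T, q => q
  | .U, .F => .U
  | .U, .U => .T
  | .U, .T => .T

def tstar : TV → TV
  | .U => .F
  | _ => .T

def tisdef : TV → TV
  | .U => .F
  | _ => .T

open Classical in
/-- Three-valued universal quantification over a domain D. -/
noncomputable def tforall {D : Type*} (g : D → TV) : TV :=
  if ∀ d, g d = TV.T then .T else if ∃ d, g d = TV.F then .F else .U

theorem TV.eq_U_of_ne_T_of_ne_F {v : TV} (hT : v ≠ .T) (hF : v ≠ .F) : v = .U := by
  cases v <;> simp_all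

theorem tforall_eq_U_iff {D : Type*} (g : D → TV) :
    tforall g = .U ↔ (∃ d, g d = .U) ∧ ∀ d, g d ≠ .F := by
  unfold tforall
  split_ifs with hT hF
  · exact iff_of_false (by decide) fun ⟨⟨d, hd⟩, _⟩ => by simp [hT d] at hd
  · obtain ⟨d, hd⟩ := hF
    exact iff_of_false (by decide) fun h => h.2 d hd
  · push Not at hT hF
    obtain ⟨d, hd⟩ := hT
    exact iff_of_true rfl ⟨⟨d, TV.eq_U_of_ne_T_of_ne_F hd (hF d)⟩, hF⟩

/-- Semantic correctness of the isdef-formula for ∀. -/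
theorem isdef_forall {D : Type*} (g : D → TV) :
    tforall g ≠ .U ↔ (∀ d, g d ≠ .U) ∨ ∃ d, g d = .F := by
  rw [Ne, tforall_eq_U_iff, not_and_or, not_exists, not_forall_not]
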